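/- arXiv:1404.1503 — 4 statements merged into one kernel-verified Lean document; each statement's English description precedes it below -/
import Mathlib

section
/- Let X be a finite set with |X| = K and let ψ : X → ℂ^(2^s) map each element to a unit vector such that |⟨ψ(w)|ψ(w')⟩| ≤ δ for all distinct w, w' ∈ X, where δ ∈ (0,1/2). Then s ≥ log₂ log₂ K − log₂ log₂ (1 + √(2/(1−δ))) − 1. -/
/-!
The states are unit vectors of a real space of dimension `2 ^ (s + 1)`, pairwise at distance at
least `√(2(1 - δ)) = 2r`. The balls of radius `r` around them are disjoint and lie in the ball of
radius `1 + r`, so comparing volumes gives `K ≤ (1 + 1/r) ^ 2 ^ (s + 1)`, and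
`1 + 1/r = 1 + √(2/(1 - δ))`. Taking `log₂` twice gives the bound.
-/

open MeasureTheory Metric Module Real
open scoped ENNReal Function InnerProductSpace

theorem card_mul_pow_finrank_le_of_pairwise_dist {E : Type*} [NormedAddCommGroup E]
    [NormedSpace ℝ E] [FiniteDimensional ℝ E] {ι : Type*} [Fintype ι] (φ : ι → E) {r : ℝ}
    (hr : 0 < r) (hφ : ∀ i, ‖φ i‖ ≤ 1) (hsep : Pairwise fun i j => 2 * r ≤ dist (φ i) (φ j)) :
    Fintype.card ι * r ^ finrank ℝ E ≤ (1 + r) ^ finrank ℝ E := by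
  borelize E
  let μ : Measure E := .addHaar
  have hdisj : Pairwise (Disjoint on fun i => ball (φ i) r) := fun i j hij =>
    ball_disjoint_ball (by linarith [hsep hij] : r + r ≤ dist (φ i) (φ j))
  have hsub : (⋃ i, ball (φ i) r) ⊆ ball 0 (1 + r) := by
    refine Set.iUnion_subset fun i x hx => ?_
    rw [mem_ball, dist_zero_right] at *
    linarith [norm_le_norm_add_norm_sub' x (φ i), hφ i, dist_eq_norm x (φ i)]
  have hvol : (Fintype.card ι : ℝ≥0∞) * ENNReal.ofReal (r ^ finrank ℝ E) * μ (ball 0 1)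
      ≤ ENNReal.ofReal ((1 + r) ^ finrank ℝ E) * μ (ball 0 1) := by
    calc _ = μ (⋃ i, ball (φ i) r) := by
          rw [measure_iUnion hdisj fun _ => measurableSet_ball, tsum_fintype]
          simp [Measure.addHaar_ball_of_pos μ _ hr, mul_assoc]
      _ ≤ μ (ball 0 (1 + r)) := measure_mono hsub
      _ = _ := Measure.addHaar_ball_of_pos μ _ (by linarith)
  rw [ENNReal.mul_le_mul_iff_left (measure_ball_pos μ 0 one_pos).ne' measure_ball_lt_top.ne,
    ← ENNReal.ofReal_natCast, ← ENNReal.ofReal_mul (by positivity)] at hvol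
  exact (ENNReal.ofReal_le_ofReal_iff (by positivity)).1 hvol

theorem sqrt_two_mul_one_sub_le_dist {𝕜 E : Type*} [RCLike 𝕜] [NormedAddCommGroup E]
    [InnerProductSpace 𝕜 E] {u v : E} (hu : ‖u‖ = 1) (hv : ‖v‖ = 1) {δ : ℝ}
    (huv : ‖⟪u, v⟫_𝕜‖ ≤ δ) : √(2 * (1 - δ)) ≤ dist u v := by
  have hsq : 2 * (1 - δ) ≤ dist u v ^ 2 := by
    rw [dist_eq_norm, norm_sub_sq (𝕜 := 𝕜), hu, hv]
    linarith [RCLike.re_le_norm (⟪u, v⟫_𝕜)]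
  simpa [Real.sqrt_sq dist_nonneg] using Real.sqrt_le_sqrt hsq

theorem card_le_one_add_sqrt_pow_finrank_of_norm_inner_le {E : Type*} [NormedAddCommGroup E]
    [InnerProductSpace ℂ E] [FiniteDimensional ℂ E] {ι : Type*} [Fintype ι] (ψ : ι → E)
    {δ : ℝ} (hδ : δ < 1) (hψ : ∀ i, ‖ψ i‖ = 1)
    (hinner : Pairwise fun i j => ‖⟪ψ i, ψ j⟫_ℂ‖ ≤ δ) :
    (Fintype.card ι : ℝ) ≤ (1 + √(2 / (1 - δ))) ^ finrank ℝ E := by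
  set r := √(2 * (1 - δ)) / 2
  have h1δ : 0 < 1 - δ := by linarith
  have hr : 0 < r := by positivity
  have hpack := card_mul_pow_finrank_le_of_pairwise_dist ψ hr (fun i => (hψ i).le)
    fun i j hij => (mul_div_cancel₀ _ two_ne_zero).trans_le
      (sqrt_two_mul_one_sub_le_dist (hψ i) (hψ j) (hinner hij))
  have hrinv : r⁻¹ = √(2 / (1 - δ)) := by
    refine (eq_inv_of_mul_eq_one_left ?_).symm
    rw [mul_div_assoc', ← Real.sqrt_mul (by positivity), div_eq_one_iff_eq two_ne_zero,
      show 2 / (1 - δ) * (2 * (1 - δ)) = 2 ^ 2 by field_simp]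
    exact Real.sqrt_sq two_pos.le
  rwa [← le_div_iff₀ (by positivity), ← div_pow, add_div, div_self hr.ne', one_div, hrinv,
    add_comm] at hpack

theorem logb_logb_natCast_le {K : ℕ} {c : ℝ} (hc : 2 ≤ c) {n : ℕ} (hK : (K : ℝ) ≤ c ^ 2 ^ n) :
    logb 2 (logb 2 K) ≤ n + logb 2 (logb 2 c) := by
  have hlogc : 1 ≤ logb 2 c := (Real.le_logb_iff_rpow_le one_lt_two (by linarith)).2 (by simpa)
  rcases le_or_gt K 1 with hK1 | hK1
  · have : logb 2 (logb 2 K) = 0 := by interval_cases K <;> simp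
    linarith [Real.logb_nonneg one_lt_two hlogc]
  have hlogK : 0 < logb 2 K := Real.logb_pos one_lt_two (by exact_mod_cast hK1)
  calc logb 2 (logb 2 K) ≤ logb 2 (2 ^ n * logb 2 c) := by
        refine Real.logb_le_logb_of_le one_lt_two hlogK ?_
        calc logb 2 K ≤ logb 2 (c ^ 2 ^ n) :=
              Real.logb_le_logb_of_le one_lt_two (by positivity) hK
          _ = 2 ^ n * logb 2 c := by rw [Real.logb_pow]; push_cast; ring
    _ = n + logb 2 (logb 2 c) := by
        rw [Real.logb_mul (by positivity) (by positivity), Real.logb_pow,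
          Real.logb_self_eq_one one_lt_two, mul_one]

theorem stmt_1 {X : Type*} [Fintype X] (K : ℕ) (hK : Fintype.card X = K)
    (s : ℕ) (δ : ℝ) (hδ0 : 0 < δ) (hδ1 : δ < 1/2)
    (ψ : X → EuclideanSpace ℂ (Fin (2^s)))
    (hunit : ∀ w, ‖ψ w‖ = 1)
    (hres : ∀ w w', w ≠ w' → ‖(⟪ψ w, ψ w'⟫_ℂ)‖ ≤ δ) :
    (s : ℝ) ≥ Real.logb 2 (Real.logb 2 K)
      - Real.logb 2 (Real.logb 2 (1 + Real.sqrt (2 / (1 - δ)))) - 1 := by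
  have hc : 2 ≤ 1 + Real.sqrt (2 / (1 - δ)) := by
    have : 1 ≤ 2 / (1 - δ) := (one_le_div (by linarith)).2 (by linarith)
    linarith [Real.one_le_sqrt.2 this]
  have hcard := card_le_one_add_sqrt_pow_finrank_of_norm_inner_le ψ (by linarith) hunit
    fun w w' h => hres w w' h
  rw [hK, finrank_real_of_complex, finrank_euclideanSpace_fin, ← pow_succ'] at hcard
  have hlog := logb_logb_natCast_le hc hcard
  push_cast at hlog
  linarith
end

section
/- Let F = {f₁,…,f_N} be an ε-universal hash family from X to Y (|X| = K), and let ψ_H : Y → ℂ^m be a δ-resistant classical-quantum function (unit vectors with pairwise inner products bounded by δ). Define ψ_G(w) = (1/√N) Σ_{i=1}^N |i⟩ ⊗ ψ_H(f_i(w)). Then for any distinct w, w' ∈ X, |⟨ψ_G(w)|ψ_G(w')⟩| ≤ ε + δ. -/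
/-!
Since the blocks |i⟩ are orthonormal, ⟨ψ_G(w)|ψ_G(w')⟩ is the average over i of
⟨ψ_H(f_i w)|ψ_H(f_i w')⟩. By ε-universality at most εN of these terms come from a collision
f_i w = f_i w', and each has modulus at most 1 by Cauchy–Schwarz; every other term has modulus
at most δ by δ-resistance. Averaging gives ε + δ.
-/

open Finset
open scoped InnerProductSpace

theorem inner_eq_sq_mul_sum_inner_of_apply_eq_mul {𝕜 ι κ : Type*} [RCLike 𝕜] [Fintype ι]
    [Fintype κ] (c : ℝ) (a b : ι → EuclideanSpace 𝕜 κ) (u v : EuclideanSpace 𝕜 (ι × κ))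
    (hu : ∀ i j, u (i, j) = c * a i j) (hv : ∀ i j, v (i, j) = c * b i j) :
    ⟪u, v⟫_𝕜 = ((c ^ 2 : ℝ) : 𝕜) * ∑ i, ⟪a i, b i⟫_𝕜 := by
  simp only [PiLp.inner_apply, Fintype.sum_prod_type, mul_sum, hu, hv, RCLike.inner_apply,
    map_mul, RCLike.conj_ofReal]
  refine sum_congr rfl fun i _ => sum_congr rfl fun j _ => ?_
  push_cast
  ring

theorem norm_sum_le_card_filter_add_card_mul {ι E : Type*} [Fintype ι]
    [SeminormedAddCommGroup E] (p : ι → Prop) [DecidablePred p] {z : ι → E} {δ : ℝ}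
    (hδ : 0 ≤ δ) (hle_one : ∀ i, ‖z i‖ ≤ 1) (hle : ∀ i, ¬p i → ‖z i‖ ≤ δ) :
    ‖∑ i, z i‖ ≤ #{i | p i} + Fintype.card ι * δ := by
  calc ‖∑ i, z i‖ ≤ ∑ i, ‖z i‖ := norm_sum_le _ _
    _ = ∑ i with p i, ‖z i‖ + ∑ i with ¬p i, ‖z i‖ :=
      (sum_filter_add_sum_filter_not _ _ _).symm
    _ ≤ ∑ i with p i, 1 + ∑ i with ¬p i, δ := by
      gcongr with i _ i hi
      · exact hle_one i
      · exact hle i (mem_filter.mp hi).2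
    _ ≤ #{i | p i} + Fintype.card ι * δ := by
      simp only [sum_const, nsmul_eq_mul, mul_one]
      gcongr
      exact card_filter_le _ _

theorem stmt_3_general {X Y : Type*} [DecidableEq Y]
    (N m : ℕ) (hN : 0 < N) (ε δ : ℝ) (hδ : 0 ≤ δ)
    (f : Fin N → X → Y)
    (huniv : ∀ w w' : X, w ≠ w' →
      ((Finset.univ.filter fun i : Fin N => f i w = f i w').card : ℝ) ≤ ε * N)
    (ψH : Y → EuclideanSpace ℂ (Fin m))
    (hunit : ∀ v, ‖ψH v‖ = 1)
    (hres : ∀ v v', v ≠ v' → ‖(⟪ψH v, ψH v'⟫_ℂ)‖ ≤ δ)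
    (ψG : X → EuclideanSpace ℂ (Fin N × Fin m))
    (hψG : ∀ w i j, ψG w (i, j) = (1 / Real.sqrt N) * ψH (f i w) j) :
    ∀ w w' : X, w ≠ w' → ‖(⟪ψG w, ψG w'⟫_ℂ)‖ ≤ ε + δ := by
  intro w w' hww
  have hscale (w : X) (i : Fin N) (j : Fin m) :
      ψG w (i, j) = ((1 / Real.sqrt N : ℝ) : ℂ) * ψH (f i w) j := by
    rw [hψG]; push_cast; rfl
  have hinner := inner_eq_sq_mul_sum_inner_of_apply_eq_mul (1 / Real.sqrt N)
    (fun i => ψH (f i w)) (fun i => ψH (f i w')) _ _ (hscale w) (hscale w')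
  have hsq : (1 / Real.sqrt N) ^ 2 = (N : ℝ)⁻¹ := by
    rw [div_pow, Real.sq_sqrt N.cast_nonneg, one_pow, one_div]
  have hsum := norm_sum_le_card_filter_add_card_mul (fun i => f i w = f i w') hδ
    (fun i => (norm_inner_le_norm _ _).trans_eq (by rw [hunit, hunit, one_mul]))
    (fun i hi => hres _ _ hi)
  have hNpos : (0 : ℝ) < N := by exact_mod_cast hN
  calc ‖⟪ψG w, ψG w'⟫_ℂ‖ = (N : ℝ)⁻¹ * ‖∑ i, ⟪ψH (f i w), ψH (f i w')⟫_ℂ‖ := by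
        rw [hinner, norm_mul, hsq, RCLike.norm_ofReal, abs_of_nonneg (by positivity)]
    _ ≤ (N : ℝ)⁻¹ * (ε * N + N * δ) := by
        gcongr
        simpa using hsum.trans (add_le_add_left (huniv w w' hww) _)
    _ = ε + δ := by field_simp

theorem stmt_3 {X Y : Type*} [Fintype X] [DecidableEq Y]
    (N m : ℕ) (hN : 0 < N) (ε δ : ℝ) (hε : 0 ≤ ε) (hδ : 0 ≤ δ)
    (f : Fin N → X → Y)
    (huniv : ∀ w w' : X, w ≠ w' →
      ((Finset.univ.filter fun i : Fin N => f i w = f i w').card : ℝ) ≤ ε * N)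
    (ψH : Y → EuclideanSpace ℂ (Fin m))
    (hunit : ∀ v, ‖ψH v‖ = 1)
    (hres : ∀ v v', v ≠ v' → ‖(⟪ψH v, ψH v'⟫_ℂ)‖ ≤ δ)
    (ψG : X → EuclideanSpace ℂ (Fin N × Fin m))
    (hψG : ∀ w i j, ψG w (i, j) = (1 / Real.sqrt N) * ψH (f i w) j) :
    ∀ w w' : X, w ≠ w' → ‖(⟪ψG w, ψG w'⟫_ℂ)‖ ≤ ε + δ :=
  stmt_3_general N m hN ε δ hδ f huniv ψH hunit hres ψG hψG
end

section
/- The composition G = F ∘ H of an ε-universal (N; K, M) hash family F : X → Y and a δ-resistant (M; log T + ℓ) quantum hash generator H = {h₁,…,h_T}, h_j : Y → F_q, is a (ε+δ)-resistant (K; log N + log T + ℓ) quantum hash generator. -/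
/-!
`ψ_G(w)` is the uniform superposition over `i` of `ψ_H(F_i w)`, so `⟨ψ_G(w), ψ_G(w')⟩` is the
average over `i` of `⟨ψ_H(F_i w), ψ_H(F_i w')⟩`. By ε-universality at most `εN` indices have a
collision `F_i w = F_i w'`, and these terms have modulus at most `1` because the states are unit
vectors; every other term has modulus at most `δ` by the resistance of `ψ_H`.
-/

open scoped InnerProductSpace
open Finset

section UniformSuperposition

variable {κ ι : Type*} [Fintype κ] [Fintype ι]

theorem inner_uniform_superposition (Ψ Φ : EuclideanSpace ℂ (κ × ι))
    (u v : κ → EuclideanSpace ℂ ι)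
    (hΨ : ∀ i p, Ψ (i, p) = (1 / Real.sqrt (Fintype.card κ)) * u i p)
    (hΦ : ∀ i p, Φ (i, p) = (1 / Real.sqrt (Fintype.card κ)) * v i p) :
    ⟪Ψ, Φ⟫_ℂ = (Fintype.card κ : ℂ)⁻¹ * ∑ i, ⟪u i, v i⟫_ℂ := by
  have hcoef : (starRingEnd ℂ) (1 / Real.sqrt (Fintype.card κ)) *
      (1 / Real.sqrt (Fintype.card κ)) = (Fintype.card κ : ℂ)⁻¹ := by
    rw [map_div₀, map_one, Complex.conj_ofReal, div_mul_div_comm, ← Complex.ofReal_mul,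
      Real.mul_self_sqrt (Nat.cast_nonneg _)]
    simp
  simp only [PiLp.inner_apply, RCLike.inner_apply, Fintype.sum_prod_type, mul_sum, hΨ, hΦ]
  refine sum_congr rfl fun i _ => sum_congr rfl fun p _ => ?_
  rw [← hcoef, map_mul]
  ring

theorem norm_uniform_superposition [Nonempty κ] (Ψ : EuclideanSpace ℂ (κ × ι))
    (u : κ → EuclideanSpace ℂ ι) (hu : ∀ i, ‖u i‖ = 1)
    (hΨ : ∀ i p, Ψ (i, p) = (1 / Real.sqrt (Fintype.card κ)) * u i p) : ‖Ψ‖ = 1 := by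
  have h : ⟪Ψ, Ψ⟫_ℂ = 1 := by
    rw [inner_uniform_superposition Ψ Ψ u u hΨ hΨ]
    simp [inner_self_eq_norm_sq_to_K, hu]
  have hsq : ‖Ψ‖ ^ 2 = 1 := by rw [← inner_self_eq_norm_sq (𝕜 := ℂ), h, RCLike.one_re]
  exact (pow_eq_one_iff_of_nonneg (norm_nonneg Ψ) two_ne_zero).mp hsq

end UniformSuperposition

theorem norm_sum_le_of_card_filter_le {κ E : Type*} [Fintype κ] [SeminormedAddCommGroup E]
    (f : κ → E) (p : κ → Prop) [DecidablePred p] {ε δ : ℝ} (hδ : 0 ≤ δ)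
    (hp : (#{i | p i} : ℝ) ≤ ε * Fintype.card κ)
    (hf : ∀ i, ‖f i‖ ≤ 1) (hfδ : ∀ i, ¬ p i → ‖f i‖ ≤ δ) :
    ‖∑ i, f i‖ ≤ (ε + δ) * Fintype.card κ := by
  have hbad : ∑ i with p i, ‖f i‖ ≤ ε * Fintype.card κ :=
    calc ∑ i with p i, ‖f i‖ ≤ ∑ i with p i, (1 : ℝ) := sum_le_sum fun i _ => hf i
      _ ≤ ε * Fintype.card κ := by simpa using hp
  have hgood : ∑ i with ¬ p i, ‖f i‖ ≤ δ * Fintype.card κ :=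
    calc ∑ i with ¬ p i, ‖f i‖ ≤ ∑ i with ¬ p i, δ :=
          sum_le_sum fun i hi => hfδ i (mem_filter.mp hi).2
      _ ≤ ∑ _i, δ := sum_le_sum_of_subset_of_nonneg (filter_subset _ _)
          fun _ _ _ => hδ
      _ = δ * Fintype.card κ := by simp [mul_comm]
  calc ‖∑ i, f i‖ ≤ ∑ i, ‖f i‖ := norm_sum_le _ _
    _ = ∑ i with p i, ‖f i‖ + ∑ i with ¬ p i, ‖f i‖ :=
      (sum_filter_add_sum_filter_not _ _ _).symm
    _ ≤ (ε + δ) * Fintype.card κ := by linarith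

theorem stmt_4_general {X Y : Type*} [DecidableEq Y]
    {𝔽 : Type*}
    (N T ℓ : ℕ) (hN : 0 < N) (hT : 0 < T)
    (ε δ : ℝ) (hδ : 0 ≤ δ)
    -- F is an ε-universal (N; K, M) hash family
    (F : Fin N → X → Y)
    (huniv : ∀ w w' : X, w ≠ w' →
      ((Finset.univ.filter fun i : Fin N => F i w = F i w').card : ℝ) ≤ ε * N)
    -- H = {h₁,…,h_T} with h_j : Y → F_q, amplitudes determined by h_j(v)
    (H : Fin T → Y → 𝔽)
    (α : 𝔽 → EuclideanSpace ℂ (Fin (2^ℓ)))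
    (hα : ∀ v, ‖α v‖ = 1)
    -- ψ_H generated by H on log T + ℓ qubits, assumed δ-resistant
    (ψH : Y → EuclideanSpace ℂ (Fin T × Fin (2^ℓ)))
    (hψH : ∀ v j x, ψH v (j, x) = (1 / Real.sqrt T) * α (H j v) x)
    (hres : ∀ v v' : Y, v ≠ v' → ‖(⟪ψH v, ψH v'⟫_ℂ)‖ ≤ δ)
    -- ψ_G generated by the composition G = F ∘ H on log N + log T + ℓ qubits
    (ψG : X → EuclideanSpace ℂ (Fin N × (Fin T × Fin (2^ℓ))))
    (hψG : ∀ w i j x,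
      ψG w (i, (j, x)) = (1 / Real.sqrt N) * ((1 / Real.sqrt T) * α (H j (F i w)) x)) :
    ∀ w w' : X, w ≠ w' → ‖(⟪ψG w, ψG w'⟫_ℂ)‖ ≤ ε + δ := by
  intro w w' hne
  have : Nonempty (Fin T) := ⟨⟨0, hT⟩⟩
  have hunit : ∀ v, ‖ψH v‖ = 1 := fun v =>
    norm_uniform_superposition (ψH v) (fun j => α (H j v)) (fun _ => hα _) (by simpa using hψH v)
  have hslice : ∀ w i p, ψG w (i, p) = (1 / Real.sqrt (Fintype.card (Fin N))) * ψH (F i w) p := by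
    rintro w i ⟨j, x⟩
    simp [hψG, hψH]
  have hinner : ⟪ψG w, ψG w'⟫_ℂ = (N : ℂ)⁻¹ * ∑ i, ⟪ψH (F i w), ψH (F i w')⟫_ℂ := by
    simpa using inner_uniform_superposition _ _ _ _ (hslice w) (hslice w')
  have hsum := norm_sum_le_of_card_filter_le (fun i => ⟪ψH (F i w), ψH (F i w')⟫_ℂ)
    (fun i => F i w = F i w') hδ (by simpa using huniv w w' hne)
    (fun _ => (norm_inner_le_norm _ _).trans (by simp [hunit])) (fun _ => hres _ _)
  rw [Fintype.card_fin] at hsum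
  rw [hinner, norm_mul, norm_inv, Complex.norm_natCast, inv_mul_le_iff₀ (by exact_mod_cast hN)]
  linarith

theorem stmt_4 {X Y : Type*} [Fintype X] [Fintype Y] [DecidableEq Y]
    {𝔽 : Type*} [Field 𝔽] [Fintype 𝔽] (q : ℕ) (hq : Fintype.card 𝔽 = q)
    (N T ℓ K M : ℕ) (hN : 0 < N) (hT : 0 < T)
    (hK : Fintype.card X = K) (hM : Fintype.card Y = M)
    (ε δ : ℝ) (hε : 0 ≤ ε) (hδ : 0 ≤ δ)
    -- F is an ε-universal (N; K, M) hash family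
    (F : Fin N → X → Y)
    (huniv : ∀ w w' : X, w ≠ w' →
      ((Finset.univ.filter fun i : Fin N => F i w = F i w').card : ℝ) ≤ ε * N)
    -- H = {h₁,…,h_T} with h_j : Y → F_q, amplitudes determined by h_j(v)
    (H : Fin T → Y → 𝔽)
    (α : 𝔽 → EuclideanSpace ℂ (Fin (2^ℓ)))
    (hα : ∀ v, ‖α v‖ = 1)
    -- ψ_H generated by H on log T + ℓ qubits, assumed δ-resistant
    (ψH : Y → EuclideanSpace ℂ (Fin T × Fin (2^ℓ)))
    (hψH : ∀ v j x, ψH v (j, x) = (1 / Real.sqrt T) * α (H j v) x)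
    (hres : ∀ v v' : Y, v ≠ v' → ‖(⟪ψH v, ψH v'⟫_ℂ)‖ ≤ δ)
    (hlog : Real.logb 2 K > Real.logb 2 N + Real.logb 2 T + ℓ)
    -- ψ_G generated by the composition G = F ∘ H on log N + log T + ℓ qubits
    (ψG : X → EuclideanSpace ℂ (Fin N × (Fin T × Fin (2^ℓ))))
    (hψG : ∀ w i j x,
      ψG w (i, (j, x)) = (1 / Real.sqrt N) * ((1 / Real.sqrt T) * α (H j (F i w)) x)) :
    ∀ w w' : X, w ≠ w' → ‖(⟪ψG w, ψG w'⟫_ℂ)‖ ≤ ε + δ :=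
  stmt_4_general N T ℓ hN hT ε δ hδ F huniv H α hα ψH hψH hres ψG hψG
end

section
/- Combining the linear hash family with the δ-resistant generator over F_q: for a prime power q, positive integer k, and δ ∈ (0,1), if H is a δ-resistant map F_q → ℂ^m (unit vectors, pairwise inner products ≤ δ) then the map ψ(w) = (1/√(q^k)) Σ_{a∈F_q^k} |a⟩ ⊗ H(Σ_i a_i w_i) on nonzero inputs w ∈ F_q^k \ {0} satisfies |⟨ψ(w)|ψ(w')⟩| ≤ 1/q + δ for all distinct nonzero w, w'. -/
open scoped InnerProductSpace
open Finset

theorem stmt_14 {𝔽 : Type*} [Field 𝔽] [Fintype 𝔽] [DecidableEq 𝔽]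
    (q k m : ℕ) (hq : Fintype.card 𝔽 = q) (hk : 1 ≤ k)
    (δ : ℝ) (hδ0 : 0 < δ) (hδ1 : δ < 1)
    (H : 𝔽 → EuclideanSpace ℂ (Fin m))
    (hunit : ∀ v, ‖H v‖ = 1)
    (hres : ∀ v v', v ≠ v' → ‖(⟪H v, H v'⟫_ℂ)‖ ≤ δ)
    (ψ : (Fin k → 𝔽) → EuclideanSpace ℂ ((Fin k → 𝔽) × Fin m))
    (hψ : ∀ w a x, ψ w (a, x) = (1 / Real.sqrt ((q : ℝ) ^ k)) * H (∑ i, a i * w i) x) :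
    ∀ w w' : Fin k → 𝔽, w ≠ 0 → w' ≠ 0 → w ≠ w' →
      ‖(⟪ψ w, ψ w'⟫_ℂ)‖ ≤ 1 / q + δ := by
  intro w w' hw hw' hne
  classical
  have hq2 : 1 < q := hq ▸ Fintype.one_lt_card
  have hq0 : (0:ℝ) < q := by exact_mod_cast Nat.lt_of_lt_of_le Nat.zero_lt_one hq2.le
  have hqk : (0:ℝ) < (q:ℝ)^k := by positivity
  have hcnn : 0 ≤ 1 / Real.sqrt ((q:ℝ)^k) := by positivity
  have hc2 : (1 / Real.sqrt ((q:ℝ)^k)) * (1 / Real.sqrt ((q:ℝ)^k)) = 1 / (q:ℝ)^k := by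
    rw [div_mul_div_comm, one_mul, Real.mul_self_sqrt hqk.le]
  set d : Fin k → 𝔽 := fun i => w i - w' i with hd
  have hdne : ∃ j, d j ≠ 0 := by
    by_contra h
    push_neg at h
    apply hne
    funext i
    have := h i
    simpa [hd, sub_eq_zero] using this
  obtain ⟨j, hj⟩ := hdne
  let φ : (Fin k → 𝔽) →ₗ[𝔽] 𝔽 :=
    { toFun := fun a => ∑ i, a i * d i
      map_add' := by intro a b; simp [add_mul, Finset.sum_add_distrib]
      map_smul' := by intro r a; simp [Finset.mul_sum, mul_assoc] }
  have hφ : ∀ a, φ a = ∑ i, a i * d i := fun a => rfl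
  have hsurj : Function.Surjective φ := by
    intro cv
    refine ⟨Pi.single j ((d j)⁻¹ * cv), ?_⟩
    rw [hφ, Finset.sum_eq_single j]
    · rw [Pi.single_eq_same]; field_simp
    · intro i _ hij; simp [Pi.single_eq_of_ne hij]
    · simp
  have hcard : Nat.card (Fin k → 𝔽) = q * Nat.card (LinearMap.ker φ) := by
    have h1 := AddSubgroup.card_eq_card_quotient_mul_card_addSubgroup
      (LinearMap.ker φ).toAddSubgroup
    have h2 : Nat.card ((Fin k → 𝔽) ⧸ (LinearMap.ker φ).toAddSubgroup) = q := by
      have heq : (LinearMap.ker φ).toAddSubgroup = φ.toAddMonoidHom.ker := by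
        ext a; simp [LinearMap.mem_ker, AddMonoidHom.mem_ker]
      have e := QuotientAddGroup.quotientKerEquivOfSurjective
        (φ.toAddMonoidHom) hsurj
      rw [heq, Nat.card_congr e.toEquiv, Nat.card_eq_fintype_card, hq]
    rw [h1, h2]
    rfl
  set S : Finset (Fin k → 𝔽) := Finset.univ.filter (fun a => φ a = 0) with hS
  have hmem : ∀ a, ((∑ i, a i * w i) = ∑ i, a i * w' i) ↔ φ a = 0 := by
    intro a
    rw [hφ]
    constructor
    · intro h
      simp only [hd, mul_sub, Finset.sum_sub_distrib, h, sub_self]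
    · intro h
      have h' : (∑ i, a i * w i) - ∑ i, a i * w' i = 0 := by
        rw [← Finset.sum_sub_distrib]
        simpa [hd, mul_sub] using h
      exact sub_eq_zero.mp h'
  have hkerS : S.card = Nat.card (LinearMap.ker φ) := by
    rw [Nat.card_eq_fintype_card, Fintype.card_subtype]
    congr 1
    ext a
    simp [hS, LinearMap.mem_ker]
  have hScard : q * S.card = q ^ k := by
    have h3 : Nat.card (Fin k → 𝔽) = q ^ k := by
      rw [Nat.card_eq_fintype_card, Fintype.card_fun, hq, Fintype.card_fin]
    rw [hkerS, ← hcard, h3]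
  have key : ⟪ψ w, ψ w'⟫_ℂ
      = (((1 / Real.sqrt ((q:ℝ)^k) : ℝ) : ℂ) * ((1 / Real.sqrt ((q:ℝ)^k) : ℝ) : ℂ))
          * ∑ a : Fin k → 𝔽,
          ⟪H (∑ i, a i * w i), H (∑ i, a i * w' i)⟫_ℂ := by
    rw [PiLp.inner_apply, Fintype.sum_prod_type, Finset.mul_sum]
    refine Finset.sum_congr rfl fun a _ => ?_
    rw [PiLp.inner_apply, Finset.mul_sum]
    refine Finset.sum_congr rfl fun x _ => ?_
    simp only [RCLike.inner_apply]
    rw [hψ, hψ]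
    beta_reduce
    simp only [map_div₀, map_one, map_mul, RCLike.conj_ofReal, Complex.conj_ofReal]
    push_cast
    ring
  rw [key, norm_mul, norm_mul, Complex.norm_real, Real.norm_eq_abs,
    abs_of_nonneg hcnn]
  have hbd : ∀ a : Fin k → 𝔽,
      ‖⟪H (∑ i, a i * w i), H (∑ i, a i * w' i)⟫_ℂ‖ ≤ if a ∈ S then 1 else δ := by
    intro a
    by_cases ha : a ∈ S
    · simp only [ha, if_true]
      calc ‖⟪H (∑ i, a i * w i), H (∑ i, a i * w' i)⟫_ℂ‖
          ≤ ‖H (∑ i, a i * w i)‖ * ‖H (∑ i, a i * w' i)‖ := norm_inner_le_norm _ _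
        _ = 1 := by rw [hunit, hunit, mul_one]
    · simp only [ha, if_false]
      apply hres
      intro hcontra
      exact ha (by simp [hS, (hmem a).mp hcontra])
  have hsum : ‖∑ a : Fin k → 𝔽,
      ⟪H (∑ i, a i * w i), H (∑ i, a i * w' i)⟫_ℂ‖
      ≤ (S.card : ℝ) + (q:ℝ)^k * δ := by
    refine le_trans (norm_sum_le _ _) ?_
    calc ∑ a : Fin k → 𝔽, ‖⟪H (∑ i, a i * w i), H (∑ i, a i * w' i)⟫_ℂ‖
        ≤ ∑ a : Fin k → 𝔽, (if a ∈ S then 1 else δ) :=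
          Finset.sum_le_sum fun a _ => hbd a
      _ = (S.card : ℝ) * 1 + ((Finset.univ.filter (fun a => a ∉ S)).card : ℝ) * δ := by
          rw [Finset.sum_ite, Finset.sum_const, Finset.sum_const,
            nsmul_eq_mul, nsmul_eq_mul, Finset.filter_mem_eq_inter,
            Finset.univ_inter]
      _ ≤ (S.card : ℝ) + (q:ℝ)^k * δ := by
          have hle : ((Finset.univ.filter (fun a => a ∉ S)).card : ℝ) ≤ (q:ℝ)^k := by
            have : (Finset.univ.filter (fun a => a ∉ S)).card ≤ q ^ k := by
              calc (Finset.univ.filter (fun a => a ∉ S)).card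
                  ≤ Finset.univ.card := Finset.card_filter_le _ _
                _ = q ^ k := by rw [Finset.card_univ, Fintype.card_fun, hq, Fintype.card_fin]
            exact_mod_cast this
          nlinarith [hδ0.le]
  calc (1 / Real.sqrt ((q:ℝ)^k)) * (1 / Real.sqrt ((q:ℝ)^k)) * ‖∑ a : Fin k → 𝔽,
      ⟪H (∑ i, a i * w i), H (∑ i, a i * w' i)⟫_ℂ‖
      ≤ (1 / Real.sqrt ((q:ℝ)^k)) * (1 / Real.sqrt ((q:ℝ)^k))
          * ((S.card : ℝ) + (q:ℝ)^k * δ) := by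
        exact mul_le_mul_of_nonneg_left hsum (by positivity)
    _ = 1 / q + δ := by
        rw [hc2]
        have hSreal : (q:ℝ) * (S.card : ℝ) = (q:ℝ)^k := by exact_mod_cast hScard
        field_simp
        nlinarith [hSreal]
end
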